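/- arXiv:2309.12696 — 2 statements merged into one kernel-verified Lean document; each statement's English description precedes it below -/
import Mathlib

section
/- Let π¹,…,πⁿ and β¹,…,βⁿ be probability mass functions on finite sets A¹,…,Aⁿ with each βⁱ everywhere positive, and let λ₁,…,λₙ ≥ 0 with Σᵢ λᵢ = 1. Define the joint distributions π(a) = Πᵢ πⁱ(aⁱ) and β(a) = Πᵢ βⁱ(aⁱ) on the product space. Then 0 ≤ Σᵢ λᵢ Σ_{aⁱ} πⁱ(aⁱ)(πⁱ(aⁱ)/βⁱ(aⁱ) − 1) ≤ Σ_a π(a)(π(a)/β(a) − 1), i.e. the counterfactual divergence D_CF := Σᵢ λᵢ D_CQL(πⁱ,βⁱ) is bounded above by the joint divergence D_CQL(π,β). -/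
/-!
`D_CQL(p, q) = ∑ p² / q - 1` is the χ²-divergence `∑ (p - q)² / q ≥ 0`, and `1 + D_CQL`
is multiplicative on product distributions. Writing `dᵢ ≥ 0` for the marginal divergences,
`∑ λᵢ dᵢ ≤ ∑ dᵢ ≤ ∏ (1 + dᵢ) - 1 = D_CQL(π, β)`.
-/

open Finset

lemma one_add_sum_le_prod_one_add {ι R : Type*} [CommSemiring R] [PartialOrder R]
    [IsOrderedRing R] (s : Finset ι) {x : ι → R} (hx : ∀ i ∈ s, 0 ≤ x i) :
    1 + ∑ i ∈ s, x i ≤ ∏ i ∈ s, (1 + x i) := by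
  induction s using Finset.cons_induction with
  | empty => simp
  | cons a s _ ih =>
    have hxa : 0 ≤ x a := hx a (mem_cons_self a s)
    have hxs : ∀ i ∈ s, 0 ≤ x i := fun i hi => hx i (mem_cons_of_mem hi)
    rw [sum_cons, prod_cons]
    calc 1 + (x a + ∑ i ∈ s, x i)
        ≤ 1 + (x a + ∑ i ∈ s, x i) + x a * ∑ i ∈ s, x i :=
          le_add_of_nonneg_right (mul_nonneg hxa (sum_nonneg hxs))
      _ = (1 + x a) * (1 + ∑ i ∈ s, x i) := by ring
      _ ≤ (1 + x a) * ∏ i ∈ s, (1 + x i) :=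
          mul_le_mul_of_nonneg_left (ih hxs) (add_nonneg zero_le_one hxa)

noncomputable def cqlDiv {α : Type*} [Fintype α] (p q : α → ℝ) : ℝ :=
  ∑ a, p a * (p a / q a - 1)

section cqlDiv

variable {α : Type*} [Fintype α] {p q : α → ℝ}

lemma cqlDiv_eq_sum_sq_div_sub_one (hp : ∑ a, p a = 1) :
    cqlDiv p q = ∑ a, p a ^ 2 / q a - 1 := by
  simp only [cqlDiv, mul_sub, mul_one, ← mul_div_assoc, ← sq]
  rw [sum_sub_distrib, hp]

lemma cqlDiv_eq_sum_sq_sub_div (hq0 : ∀ a, q a ≠ 0) (hp : ∑ a, p a = 1)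
    (hq : ∑ a, q a = 1) : cqlDiv p q = ∑ a, (p a - q a) ^ 2 / q a := by
  have hterm : ∀ a, (p a - q a) ^ 2 / q a = p a ^ 2 / q a - 2 * p a + q a := fun a => by
    field_simp [hq0 a]
    ring
  simp only [hterm, sum_add_distrib, sum_sub_distrib, ← mul_sum, hp, hq,
    cqlDiv_eq_sum_sq_div_sub_one hp]
  ring

lemma cqlDiv_nonneg (hq0 : ∀ a, 0 < q a) (hp : ∑ a, p a = 1) (hq : ∑ a, q a = 1) :
    0 ≤ cqlDiv p q := by
  rw [cqlDiv_eq_sum_sq_sub_div (fun a => (hq0 a).ne') hp hq]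
  exact sum_nonneg fun a _ => div_nonneg (sq_nonneg _) (hq0 a).le

end cqlDiv

lemma cqlDiv_pi {ι : Type*} [Fintype ι] [DecidableEq ι] {A : ι → Type*} [∀ i, Fintype (A i)]
    (p q : ∀ i, A i → ℝ) (hp : ∀ i, ∑ a, p i a = 1) :
    cqlDiv (fun a : ∀ i, A i => ∏ i, p i (a i)) (fun a => ∏ i, q i (a i)) =
      ∏ i, (1 + cqlDiv (p i) (q i)) - 1 := by
  have hprod : ∑ a : ∀ i, A i, ∏ i, p i (a i) = 1 := by
    rw [← Fintype.prod_sum]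
    simp [hp]
  simp only [cqlDiv_eq_sum_sq_div_sub_one hprod, cqlDiv_eq_sum_sq_div_sub_one (hp _),
    add_sub_cancel, Fintype.prod_sum, ← prod_pow, ← prod_div_distrib]

theorem dcf_le_dcql_general {n : ℕ} (A : Fin n → Type*) [∀ i, Fintype (A i)]
    (π β : ∀ i, A i → ℝ) (lam : Fin n → ℝ)
    (hβpos : ∀ i a, 0 < β i a)
    (hπ1 : ∀ i, ∑ a, π i a = 1) (hβ1 : ∀ i, ∑ a, β i a = 1)
    (hlam0 : ∀ i, 0 ≤ lam i) (hlam1 : ∑ i, lam i = 1) :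
    0 ≤ ∑ i, lam i * ∑ a, π i a * (π i a / β i a - 1) ∧
    (∑ i, lam i * ∑ a, π i a * (π i a / β i a - 1)) ≤
      ∑ a : (∀ i, A i), (∏ i, π i (a i)) * ((∏ i, π i (a i)) / (∏ i, β i (a i)) - 1) := by
  change 0 ≤ ∑ i, lam i * cqlDiv (π i) (β i) ∧
    ∑ i, lam i * cqlDiv (π i) (β i) ≤
      cqlDiv (fun a : ∀ i, A i => ∏ i, π i (a i)) (fun a => ∏ i, β i (a i))
  have hd : ∀ i, 0 ≤ cqlDiv (π i) (β i) := fun i => cqlDiv_nonneg (hβpos i) (hπ1 i) (hβ1 i)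
  have hlam_le_one : ∀ i, lam i ≤ 1 := fun i =>
    hlam1 ▸ single_le_sum (fun j _ => hlam0 j) (mem_univ i)
  rw [cqlDiv_pi π β hπ1]
  refine ⟨sum_nonneg fun i _ => mul_nonneg (hlam0 i) (hd i), ?_⟩
  calc ∑ i, lam i * cqlDiv (π i) (β i)
      ≤ ∑ i, cqlDiv (π i) (β i) :=
        sum_le_sum fun i _ => mul_le_of_le_one_left (hd i) (hlam_le_one i)
    _ ≤ ∏ i, (1 + cqlDiv (π i) (β i)) - 1 :=
        le_sub_iff_add_le'.2 (one_add_sum_le_prod_one_add _ fun i _ => hd i)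

theorem dcf_le_dcql {n : ℕ} (A : Fin n → Type*) [∀ i, Fintype (A i)]
    (π β : ∀ i, A i → ℝ) (lam : Fin n → ℝ)
    (hπ0 : ∀ i a, 0 ≤ π i a) (hβpos : ∀ i a, 0 < β i a)
    (hπ1 : ∀ i, ∑ a, π i a = 1) (hβ1 : ∀ i, ∑ a, β i a = 1)
    (hlam0 : ∀ i, 0 ≤ lam i) (hlam1 : ∑ i, lam i = 1) :
    0 ≤ ∑ i, lam i * ∑ a, π i a * (π i a / β i a - 1) ∧
    (∑ i, lam i * ∑ a, π i a * (π i a / β i a - 1)) ≤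
      ∑ a : (∀ i, A i), (∏ i, π i (a i)) * ((∏ i, π i (a i)) / (∏ i, β i (a i)) - 1) :=
  dcf_le_dcql_general A π β lam hβpos hπ1 hβ1 hlam0 hlam1
end

section
/- Let π¹,…,πⁿ, β¹,…,βⁿ be probability mass functions on finite sets, each βⁱ everywhere positive, and λ in the probability simplex. Let j be an index maximizing E_{πᵏ}[πᵏ/βᵏ] over k. If D_CF := Σᵢ λᵢ Σ_{aⁱ} πⁱ(aⁱ)(πⁱ(aⁱ)/βⁱ(aⁱ) − 1) > 0, then D_CQL(π,β)/D_CF ≥ exp(Σ_{i≠j} KL(πⁱ‖βⁱ)), where D_CQL(π,β) = Πᵢ(Σ_{aⁱ} πⁱ(aⁱ)²/βⁱ(aⁱ)) − 1 is the divergence of the joint product distributions. -/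
/-!
Write `Sᵢ = ∑ₐ πⁱ(a)² / βⁱ(a)`, so that the `i`-th summand of `D_CF` is `Sᵢ - 1` and
`D_CQL = ∏ᵢ Sᵢ - 1`. By Cauchy–Schwarz (Sedrakyan's form) `1 ≤ Sᵢ`, and by the weighted AM–GM
inequality with weights `πⁱ` applied to the ratios `πⁱ/βⁱ`, `exp KL(πⁱ‖βⁱ) ≤ Sᵢ`. Being a convex
combination, `D_CF ≤ Sⱼ - 1`. With `P = ∏_{i ≠ j} Sᵢ ≥ 1` this gives
`D_CF · exp (∑_{i ≠ j} KL(πⁱ‖βⁱ)) ≤ (Sⱼ - 1) P ≤ Sⱼ P - 1 = D_CQL`.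
-/

open Finset

section FiniteDistribution

open Real

variable {α : Type*} [Fintype α] {p q : α → ℝ}

lemma sum_mul_div_self_eq_sum_sq_div (p q : α → ℝ) :
    ∑ a, p a * (p a / q a) = ∑ a, p a ^ 2 / q a :=
  sum_congr rfl fun a _ => by rw [mul_div_assoc', sq]

lemma sum_mul_div_sub_one_eq (hp1 : ∑ a, p a = 1) :
    ∑ a, p a * (p a / q a - 1) = ∑ a, p a ^ 2 / q a - 1 := by
  simp only [mul_sub, mul_one, sum_sub_distrib, sum_mul_div_self_eq_sum_sq_div, hp1]

lemma one_le_sum_sq_div (hq : ∀ a, 0 < q a) (hp1 : ∑ a, p a = 1) (hq1 : ∑ a, q a = 1) :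
    1 ≤ ∑ a, p a ^ 2 / q a := by
  simpa [hp1, hq1] using sq_sum_div_le_sum_sq_div univ p fun a _ => hq a

lemma exp_sum_mul_log_div_le_sum_sq_div (hp0 : ∀ a, 0 ≤ p a) (hq : ∀ a, 0 < q a)
    (hp1 : ∑ a, p a = 1) :
    exp (∑ a, p a * log (p a / q a)) ≤ ∑ a, p a ^ 2 / q a := by
  have hexp : exp (∑ a, p a * log (p a / q a)) = ∏ a, (p a / q a) ^ p a := by
    rw [exp_sum]
    refine prod_congr rfl fun a _ => ?_
    rcases (hp0 a).eq_or_lt with h0 | h0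
    · rw [← h0, zero_mul, exp_zero, rpow_zero]
    · rw [rpow_def_of_pos (div_pos h0 (hq a)), mul_comm]
  rw [hexp, ← sum_mul_div_self_eq_sum_sq_div]
  exact geom_mean_le_arith_mean_weighted univ p _ (fun a _ => hp0 a) hp1
    fun a _ => div_nonneg (hp0 a) (hq a).le

end FiniteDistribution

lemma sum_mul_le_of_forall_le {ι : Type*} [Fintype ι] {w x : ι → ℝ} {M : ℝ}
    (hw0 : ∀ i, 0 ≤ w i) (hw1 : ∑ i, w i = 1) (hx : ∀ i, x i ≤ M) :
    ∑ i, w i * x i ≤ M :=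
  calc ∑ i, w i * x i ≤ ∑ i, w i * M := sum_le_sum fun i _ => by gcongr; exacts [hw0 i, hx i]
    _ = M := by rw [← sum_mul, hw1, one_mul]

lemma le_mul_sub_one_div {D s P : ℝ} (hD : 0 < D) (hDs : D ≤ s - 1) (hP : 1 ≤ P) :
    P ≤ (s * P - 1) / D := by
  rw [le_div_iff₀ hD]
  nlinarith

theorem dcql_ratio_ge_exp_kl {n : ℕ} (A : Fin n → Type*) [∀ i, Fintype (A i)]
    (π β : ∀ i, A i → ℝ) (lam : Fin n → ℝ) (j : Fin n)
    (hπ0 : ∀ i a, 0 ≤ π i a) (hβpos : ∀ i a, 0 < β i a)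
    (hπ1 : ∀ i, ∑ a, π i a = 1) (hβ1 : ∀ i, ∑ a, β i a = 1)
    (hlam0 : ∀ i, 0 ≤ lam i) (hlam1 : ∑ i, lam i = 1)
    (hj : ∀ k, (∑ a, π k a * (π k a / β k a)) ≤ ∑ a, π j a * (π j a / β j a))
    (hDCF : 0 < ∑ i, lam i * ∑ a, π i a * (π i a / β i a - 1)) :
    Real.exp (∑ i ∈ Finset.univ.erase j, ∑ a, π i a * Real.log (π i a / β i a)) ≤
      ((∏ i, ∑ a, (π i a) ^ 2 / β i a) - 1) /
        (∑ i, lam i * ∑ a, π i a * (π i a / β i a - 1)) := by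
  set S : Fin n → ℝ := fun i => ∑ a, π i a ^ 2 / β i a
  have hDCF_le : ∑ i, lam i * ∑ a, π i a * (π i a / β i a - 1) ≤ S j - 1 := by
    simp only [sum_mul_div_sub_one_eq (hπ1 _)]
    refine sum_mul_le_of_forall_le hlam0 hlam1 fun i => ?_
    simpa only [sum_mul_div_self_eq_sum_sq_div, sub_le_sub_iff_right] using hj i
  have hexp_le : Real.exp (∑ i ∈ univ.erase j, ∑ a, π i a * Real.log (π i a / β i a)) ≤
      ∏ i ∈ univ.erase j, S i := by
    rw [Real.exp_sum]
    exact prod_le_prod (fun i _ => (Real.exp_pos _).le) fun i _ =>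
      exp_sum_mul_log_div_le_sum_sq_div (hπ0 i) (hβpos i) (hπ1 i)
  have hone_le : 1 ≤ ∏ i ∈ univ.erase j, S i :=
    one_le_prod fun i _ => one_le_sum_sq_div (hβpos i) (hπ1 i) (hβ1 i)
  rw [← mul_prod_erase univ S (mem_univ j)]
  exact hexp_le.trans (le_mul_sub_one_div hDCF hDCF_le hone_le)
end
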